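/- Let a : ℕ → ℝ be a completely alternating sequence with a_n ≤ 0 for all n, let 0 ≤ r ≤ 1, and let N ≥ 0 be an integer. Then a negatively dominates the sequence b defined by b_n = r · a_{n+N}; that is, (∇ᵐ a)_k ≤ (∇ᵐ b)_k for all m ≥ 0 and k ≥ 0. -/
import Mathlib


/-- The `n`-th iterated forward difference of a sequence, evaluated at `k`
(with `∇⁰ a = a`). -/
noncomputable def fdiff (a : ℕ → ℝ) (n k : ℕ) : ℝ :=
  ∑ i ∈ Finset.range (n + 1), (-1 : ℝ) ^ i * (n.choose i : ℝ) * a (k + i)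

/-- A sequence is completely alternating if all iterated forward differences of
order `n ≥ 1` are nonpositive. -/
def CompletelyAlternating (a : ℕ → ℝ) : Prop :=
  ∀ n : ℕ, 1 ≤ n → ∀ k : ℕ, fdiff a n k ≤ 0

open fwdDiff in
lemma fdiff_eq_fwdDiff (a : ℕ → ℝ) (n k : ℕ) :
    fdiff a n k = (-1 : ℝ) ^ n * (Δ_[1])^[n] a k := by
  rw [fwdDiff_iter_eq_sum_shift, fdiff, Finset.mul_sum]
  apply Finset.sum_congr rfl
  intro i hi
  rw [Finset.mem_range, Nat.lt_succ_iff] at hi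
  rw [zsmul_eq_mul]
  push_cast
  rw [smul_eq_mul, mul_one, ← mul_assoc, ← mul_assoc, ← pow_add]
  have h2 : n + (n - i) = 2 * (n - i) + i := by omega
  rw [h2, pow_add, pow_mul, neg_one_sq, one_pow, one_mul]

lemma fdiff_succ (a : ℕ → ℝ) (n k : ℕ) :
    fdiff a (n + 1) k = fdiff a n k - fdiff a n (k + 1) := by
  rw [fdiff_eq_fwdDiff, fdiff_eq_fwdDiff, fdiff_eq_fwdDiff,
    Function.iterate_succ_apply']
  simp only [fwdDiff]
  ring

lemma fdiff_mono (a : ℕ → ℝ) (ha : CompletelyAlternating a) (n k : ℕ) :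
    fdiff a n k ≤ fdiff a n (k + 1) := by
  have h := ha (n + 1) (by omega) k
  rw [fdiff_succ] at h
  linarith

lemma fdiff_mono' (a : ℕ → ℝ) (ha : CompletelyAlternating a) (n k N : ℕ) :
    fdiff a n k ≤ fdiff a n (k + N) := by
  induction N with
  | zero => simp
  | succ N ih => exact ih.trans (by rw [← add_assoc]; exact fdiff_mono a ha n (k + N))

lemma fdiff_shift_mul (a : ℕ → ℝ) (r : ℝ) (N m k : ℕ) :
    fdiff (fun n => r * a (n + N)) m k = r * fdiff a m (k + N) := by
  rw [fdiff, fdiff, Finset.mul_sum]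
  apply Finset.sum_congr rfl
  intro i _
  have h : k + i + N = k + N + i := by omega
  simp only [h]
  ring

theorem stmt7 (a : ℕ → ℝ) (ha : CompletelyAlternating a) (hneg : ∀ n, a n ≤ 0)
    (r : ℝ) (hr0 : 0 ≤ r) (hr1 : r ≤ 1) (N : ℕ) :
    ∀ m k : ℕ, fdiff a m k ≤ fdiff (fun n => r * a (n + N)) m k := by
  intro m k
  rw [fdiff_shift_mul]
  have hx : fdiff a m (k + N) ≤ 0 := by
    cases m with
    | zero => simpa [fdiff] using hneg (k + N)
    | succ m => exact ha (m + 1) (by omega) (k + N)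
  have h1 : fdiff a m k ≤ fdiff a m (k + N) := fdiff_mono' a ha m k N
  have h2 : 1 * fdiff a m (k + N) ≤ r * fdiff a m (k + N) :=
    mul_le_mul_of_nonpos_right hr1 hx
  linarith
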